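/- In the nil affine Hecke algebra H_n, for each 1 ≤ i ≤ n: x_i · Δ_n = Δ_n · x_i, where Δ_n is the image of Σ_{r=1}^n τ_r⋯τ_{n−1} ⊗ τ_1⋯τ_{r−1} in H_n ι_0 ⊗_{H_{n−1}[y]} ι_1 H_n, the left action being left multiplication on the first factor and the right action right multiplication on the second factor. -/

import Mathlib

open scoped TensorProduct

namespace NilHecke

variable (k : Type) [Field k]

/-- Relations of the nil affine Hecke algebra `H n` (0-based indices: generators
`x_0,…,x_{n-1}` and `τ_0,…,τ_{n-2}`; out-of-range generators are killed). -/
inductive Rel (n : ℕ) : FreeAlgebra k (ℕ ⊕ ℕ) → FreeAlgebra k (ℕ ⊕ ℕ) → Prop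
  | xkill (i : ℕ) (h : n ≤ i) : Rel n (FreeAlgebra.ι k (.inl i)) 0
  | tkill (i : ℕ) (h : n ≤ i + 1) : Rel n (FreeAlgebra.ι k (.inr i)) 0
  | tsq (i : ℕ) : Rel n (FreeAlgebra.ι k (.inr i) * FreeAlgebra.ι k (.inr i)) 0
  | braid (i : ℕ) :
      Rel n (FreeAlgebra.ι k (.inr i) * FreeAlgebra.ι k (.inr (i+1)) * FreeAlgebra.ι k (.inr i))
        (FreeAlgebra.ι k (.inr (i+1)) * FreeAlgebra.ι k (.inr i) * FreeAlgebra.ι k (.inr (i+1)))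
  | tcomm (i j : ℕ) (h : i + 1 < j) :
      Rel n (FreeAlgebra.ι k (.inr i) * FreeAlgebra.ι k (.inr j))
        (FreeAlgebra.ι k (.inr j) * FreeAlgebra.ι k (.inr i))
  | xcomm (i j : ℕ) :
      Rel n (FreeAlgebra.ι k (.inl i) * FreeAlgebra.ι k (.inl j))
        (FreeAlgebra.ι k (.inl j) * FreeAlgebra.ι k (.inl i))
  | txcomm (i j : ℕ) (h1 : j ≠ i) (h2 : j ≠ i + 1) :
      Rel n (FreeAlgebra.ι k (.inr i) * FreeAlgebra.ι k (.inl j))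
        (FreeAlgebra.ι k (.inl j) * FreeAlgebra.ι k (.inr i))
  | tx (i : ℕ) (h : i + 1 < n) :
      Rel n (FreeAlgebra.ι k (.inr i) * FreeAlgebra.ι k (.inl i)
          - FreeAlgebra.ι k (.inl (i+1)) * FreeAlgebra.ι k (.inr i)) 1
  | xt (i : ℕ) (h : i + 1 < n) :
      Rel n (FreeAlgebra.ι k (.inl i) * FreeAlgebra.ι k (.inr i)
          - FreeAlgebra.ι k (.inr i) * FreeAlgebra.ι k (.inl (i+1))) 1

/-- The nil affine Hecke algebra on `n` strands over `k`. -/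
def H (n : ℕ) : Type := RingQuot (Rel k n)

instance (n : ℕ) : Ring (H k n) := inferInstanceAs (Ring (RingQuot (Rel k n)))

instance (n : ℕ) : Algebra k (H k n) := inferInstanceAs (Algebra k (RingQuot (Rel k n)))

/-- The polynomial generator `x_{i+1}` (0-based `x_i`). -/
def X (n i : ℕ) : H k n := RingQuot.mkAlgHom k (Rel k n) (FreeAlgebra.ι k (.inl i))

/-- The nil Hecke generator `τ_{i+1}` (0-based `τ_i`). -/
def T (n i : ℕ) : H k n := RingQuot.mkAlgHom k (Rel k n) (FreeAlgebra.ι k (.inr i))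

/-- The element `s_i = τ_i (x_i - x_{i+1}) - 1`. -/
def s (n i : ℕ) : H k n := T k n i * (X k n i - X k n (i+1)) - 1

/-- The ascending product `τ_a τ_{a+1} ⋯ τ_{b-1}` (0-based). -/
def chain (n a b : ℕ) : H k n := (List.map (T k n) (List.range' a (b - a))).prod

theorem X_kill (n i : ℕ) (h : n ≤ i) : X k n i = 0 := by
  have h := RingQuot.mkAlgHom_rel k (Rel.xkill (k := k) (n := n) i h)
  simp only [map_mul, map_sub, map_one, map_zero] at h
  exact h

theorem T_kill (n i : ℕ) (h : n ≤ i + 1) : T k n i = 0 := by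
  have h := RingQuot.mkAlgHom_rel k (Rel.tkill (k := k) (n := n) i h)
  simp only [map_mul, map_sub, map_one, map_zero] at h
  exact h

theorem T_sq (n i : ℕ) : T k n i * T k n i = 0 := by
  have h := RingQuot.mkAlgHom_rel k (Rel.tsq (k := k) (n := n) i)
  simp only [map_mul, map_sub, map_one, map_zero] at h
  exact h

theorem T_braid (n i : ℕ) :
    T k n i * T k n (i+1) * T k n i = T k n (i+1) * T k n i * T k n (i+1) := by
  have h := RingQuot.mkAlgHom_rel k (Rel.braid (k := k) (n := n) i)
  simp only [map_mul, map_sub, map_one, map_zero] at h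
  exact h

theorem T_comm (n i j : ℕ) (h : i + 1 < j) : T k n i * T k n j = T k n j * T k n i := by
  have h := RingQuot.mkAlgHom_rel k (Rel.tcomm (k := k) (n := n) i j h)
  simp only [map_mul, map_sub, map_one, map_zero] at h
  exact h

theorem X_comm (n i j : ℕ) : X k n i * X k n j = X k n j * X k n i := by
  have h := RingQuot.mkAlgHom_rel k (Rel.xcomm (k := k) (n := n) i j)
  simp only [map_mul, map_sub, map_one, map_zero] at h
  exact h

theorem TX_comm (n i j : ℕ) (h1 : j ≠ i) (h2 : j ≠ i + 1) :
    T k n i * X k n j = X k n j * T k n i := by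
  have h := RingQuot.mkAlgHom_rel k (Rel.txcomm (k := k) (n := n) i j h1 h2)
  simp only [map_mul, map_sub, map_one, map_zero] at h
  exact h

theorem TX (n i : ℕ) (h : i + 1 < n) :
    T k n i * X k n i - X k n (i+1) * T k n i = 1 := by
  have h := RingQuot.mkAlgHom_rel k (Rel.tx (k := k) (n := n) i h)
  simp only [map_mul, map_sub, map_one, map_zero] at h
  exact h

theorem XT (n i : ℕ) (h : i + 1 < n) :
    X k n i * T k n i - T k n i * X k n (i+1) = 1 := by
  have h := RingQuot.mkAlgHom_rel k (Rel.xt (k := k) (n := n) i h)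
  simp only [map_mul, map_sub, map_one, map_zero] at h
  exact h

/-- The inclusion `H m → H n` for `m ≤ n`. -/
def incl (m n : ℕ) (h : m ≤ n) : H k m →ₐ[k] H k n :=
  RingQuot.liftAlgHom k ⟨FreeAlgebra.lift k (fun g =>
    match g with
    | .inl i => if i < m then X k n i else 0
    | .inr i => if i + 1 < m then T k n i else 0), by
      rintro a b r
      induction r with
      | xkill i h' => simp only [FreeAlgebra.lift_ι_apply, map_zero]; rw [if_neg (by omega)]
      | tkill i h' => simp only [FreeAlgebra.lift_ι_apply, map_zero]; rw [if_neg (by omega)]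
      | tsq i =>
          simp only [map_mul, FreeAlgebra.lift_ι_apply, map_zero]
          split_ifs <;> simp [T_sq]
      | braid i =>
          simp only [map_mul, FreeAlgebra.lift_ι_apply]
          split_ifs <;> simp [T_braid]
      | tcomm i j h' =>
          simp only [map_mul, FreeAlgebra.lift_ι_apply]
          split_ifs <;> simp [T_comm k n i j h']
      | xcomm i j =>
          simp only [map_mul, FreeAlgebra.lift_ι_apply]
          split_ifs <;> simp [X_comm k n i j]
      | txcomm i j h1 h2 =>
          simp only [map_mul, FreeAlgebra.lift_ι_apply]
          split_ifs <;> simp [TX_comm k n i j h1 h2]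
      | tx i h' =>
          simp only [map_sub, map_mul, map_one, FreeAlgebra.lift_ι_apply]
          rw [if_pos h', if_pos (by omega : i < m), if_pos (by omega : i + 1 < m)]
          exact TX k n i (by omega)
      | xt i h' =>
          simp only [map_sub, map_mul, map_one, FreeAlgebra.lift_ι_apply]
          rw [if_pos (by omega : i < m), if_pos h', if_pos h']
          exact XT k n i (by omega)⟩

/-- The shift embedding `H m → H n` (sending `x_i ↦ x_{i+1}`, `τ_i ↦ τ_{i+1}`). -/
def shj (m n : ℕ) (h : m + 1 ≤ n ∨ m = 0) : H k m →ₐ[k] H k n :=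
  RingQuot.liftAlgHom k ⟨FreeAlgebra.lift k (fun g =>
    match g with
    | .inl i => if i < m then X k n (i+1) else 0
    | .inr i => if i + 1 < m then T k n (i+1) else 0), by
      rintro a b r
      induction r with
      | xkill i h' => simp only [FreeAlgebra.lift_ι_apply, map_zero]; rw [if_neg (by omega)]
      | tkill i h' => simp only [FreeAlgebra.lift_ι_apply, map_zero]; rw [if_neg (by omega)]
      | tsq i =>
          simp only [map_mul, FreeAlgebra.lift_ι_apply, map_zero]
          split_ifs <;> simp [T_sq]
      | braid i =>
          simp only [map_mul, FreeAlgebra.lift_ι_apply]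
          split_ifs <;> simp [T_braid]
      | tcomm i j h' =>
          simp only [map_mul, FreeAlgebra.lift_ι_apply]
          split_ifs <;> simp [T_comm k n (i+1) (j+1) (by omega)]
      | xcomm i j =>
          simp only [map_mul, FreeAlgebra.lift_ι_apply]
          split_ifs <;> simp [X_comm k n (i+1) (j+1)]
      | txcomm i j h1 h2 =>
          simp only [map_mul, FreeAlgebra.lift_ι_apply]
          split_ifs <;> simp [TX_comm k n (i+1) (j+1) (by omega) (by omega)]
      | tx i h' =>
          simp only [map_sub, map_mul, map_one, FreeAlgebra.lift_ι_apply]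
          rw [if_pos h', if_pos (by omega : i < m), if_pos (by omega : i + 1 < m)]
          exact TX k n (i+1) (by omega)
      | xt i h' =>
          simp only [map_sub, map_mul, map_one, FreeAlgebra.lift_ι_apply]
          rw [if_pos (by omega : i < m), if_pos h', if_pos h']
          exact XT k n (i+1) (by omega)⟩

end NilHecke

namespace NilHecke

variable (k : Type) [Field k]

/-- `ι_0 : H_{n−1}[y] → H_n`, sending `x_i ↦ x_i`, `τ_i ↦ τ_i`, `y ↦ x_n`
(0-based: `y ↦ x_{n-1}`, the last variable). -/
def iota0 (n : ℕ) (p : Polynomial (H k (n-1))) : H k n :=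
  p.sum fun i a => incl k (n-1) n (Nat.sub_le n 1) a * X k n (n-1) ^ i

/-- `ι_1 : H_{n−1}[y] → H_n`, sending `x_i ↦ x_{i+1}`, `τ_i ↦ τ_{i+1}`, `y ↦ x_1`
(0-based: `y ↦ x_0`, the first variable). -/
def iota1 (n : ℕ) (p : Polynomial (H k (n-1))) : H k n :=
  p.sum fun i a => shj k (n-1) n (by omega) a * X k n 0 ^ i

/-- The balancing submodule of `H_n ⊗_k H_n` whose quotient is the balanced tensor
product `H_n ι_0 ⊗_{H_{n−1}[y]} ι_1 H_n`. -/
noncomputable def bal (n : ℕ) : Submodule k (H k n ⊗[k] H k n) :=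
  Submodule.span k {z | ∃ (a b : H k n) (p : Polynomial (H k (n-1))),
    z = (a * iota0 k n p) ⊗ₜ[k] b - a ⊗ₜ[k] (iota1 k n p * b)}

/-- A representative in `H_n ⊗_k H_n` of the element
`Δ_n = Σ_{r=1}^{n} (τ_r ⋯ τ_{n−1}) ⊗ (τ_1 ⋯ τ_{r−1})` (1-based indices). -/
noncomputable def deltaT (n : ℕ) : H k n ⊗[k] H k n :=
  ∑ r ∈ Finset.range n, chain k n r (n-1) ⊗ₜ[k] chain k n 0 r

/-- A representative of `p · Δ_n` for `p ∈ H_n[y]` acting through the left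
`H_n[y]`-module structure of `H_n ι_0 ⊗_{H_{n−1}[y]} ι_1 H_n` (on the left factor,
`y` acting via `x_n`, i.e. a coefficient `c·y^i` sends `m ⊗ h` to `c·m·x_n^i ⊗ h`). -/
noncomputable def actDelta (n : ℕ) (p : Polynomial (H k n)) : H k n ⊗[k] H k n :=
  ∑ r ∈ Finset.range n,
    (p.sum fun i c => c * chain k n r (n-1) * X k n (n-1) ^ i) ⊗ₜ[k] chain k n 0 r

end NilHecke

/-!
Write `C(a, b) = τ_a ⋯ τ_{b-1}`, so that `Δ_n = Σ_r C(r, n-1) ⊗ C(0, r)`. Moving `x_i` through a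
chain with the relations `τ_j x_j - x_{j+1} τ_j = 1 = x_j τ_j - τ_j x_{j+1}` leaves, for each
letter `τ_j` it cannot pass, a correction term in which that letter is deleted. In the balanced
tensor product a chain may be moved across `⊗` at the price of shifting its indices by one,
`x_j ⊗ 1 = 1 ⊗ x_{j+1}` for `j < n-1` and `x_{n-1} ⊗ 1 = 1 ⊗ x_0`. After these moves the `r`-th
summand of `x_i Δ_n - Δ_n x_i` is `-A_r` for `r < i`, `-B_{r-1}` for `r > i`, and
`Σ_{r < i} A_r + Σ_{i ≤ s < n-1} B_s` for `r = i`, where `A_r = C(i, n-1) ⊗ C(r+1, i) C(0, r)` and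
`B_s = C(s+1, n-1) C(i, s) ⊗ C(0, i)`; so the sum vanishes.
-/

theorem sum_range_eq_zero_of_split {M : Type*} [AddCommGroup M] {f a b : ℕ → M} {i n : ℕ}
    (hi : i < n) (hlt : ∀ r < i, f r = -a r)
    (hself : f i = ∑ r ∈ Finset.range i, a r + ∑ s ∈ Finset.Ico i (n - 1), b s)
    (hgt : ∀ s, i ≤ s → s + 1 < n → f (s + 1) = -b s) :
    ∑ r ∈ Finset.range n, f r = 0 := by
  have hshift : ∑ r ∈ Finset.Ico (i + 1) n, f r = ∑ s ∈ Finset.Ico i (n - 1), f (s + 1) := by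
    rw [Finset.sum_Ico_add', Nat.sub_add_cancel (by omega)]
  rw [← Finset.sum_range_add_sum_Ico f (show i + 1 ≤ n by omega), Finset.sum_range_succ, hshift,
    Finset.sum_congr rfl fun r hr => hlt r (Finset.mem_range.mp hr), hself,
    Finset.sum_congr rfl fun s hs => hgt s (Finset.mem_Ico.mp hs).1 (by
      have := (Finset.mem_Ico.mp hs).2; omega)]
  simp only [Finset.sum_neg_distrib]
  abel

namespace NilHecke

section

variable (k : Type) [Field k] (n : ℕ)

section Chain

theorem chain_of_le {a b : ℕ} (h : b ≤ a) : chain k n a b = 1 := by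
  simp [chain, Nat.sub_eq_zero_of_le h]

theorem chain_succ {a b : ℕ} (h : a ≤ b) : chain k n a (b + 1) = chain k n a b * T k n b := by
  rw [chain, chain, Nat.sub_add_comm h, List.range'_1_concat, List.map_append,
    List.prod_append, Nat.add_sub_cancel' h]
  simp

theorem chain_mul_chain {a b c : ℕ} (hab : a ≤ b) (hbc : b ≤ c) :
    chain k n a b * chain k n b c = chain k n a c := by
  rw [chain, chain, chain, ← List.prod_append, ← List.map_append,
    show c - a = (b - a) + (c - b) by omega, ← List.range'_append,
    show a + 1 * (b - a) = b by omega]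

theorem chain_eq_chain_mul_T_mul_chain {a j b : ℕ} (haj : a ≤ j) (hjb : j < b) :
    chain k n a b = chain k n a j * T k n j * chain k n (j + 1) b := by
  rw [← chain_succ k n haj, chain_mul_chain k n (by omega) hjb]

theorem commute_chain {c : H k n} {a b : ℕ} (h : ∀ j, a ≤ j → j < b → Commute c (T k n j)) :
    Commute c (chain k n a b) :=
  Commute.list_prod_right _ _ <| by
    simp only [List.mem_map, List.mem_range'_1]
    rintro _ ⟨j, ⟨haj, hjb⟩, rfl⟩
    exact h j haj (by omega)

theorem commute_X_chain {p a b : ℕ} (h : p < a ∨ b < p) : Commute (X k n p) (chain k n a b) :=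
  commute_chain k n fun j _ _ => (TX_comm k n j p (by omega) (by omega)).symm

theorem commute_chain_chain {a b c d : ℕ} (h : b < c) :
    Commute (chain k n a b) (chain k n c d) :=
  commute_chain k n fun l hcl _ =>
    (commute_chain k n fun j _ hjb => (T_comm k n j l (by omega)).symm).symm

theorem X_mul_chain {a b : ℕ} (hab : a ≤ b) (hb : b < n) :
    X k n a * chain k n a b = chain k n a b * X k n b
      + ∑ s ∈ Finset.Ico a b, chain k n a s * chain k n (s + 1) b := by
  induction b, hab using Nat.le_induction with
  | base => simp [chain_of_le k n le_rfl]
  | succ b hab ih =>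
    have hXT : X k n b * T k n b = T k n b * X k n (b + 1) + 1 :=
      eq_add_of_sub_eq' (XT k n b hb)
    have hsum : (∑ s ∈ Finset.Ico a b, chain k n a s * chain k n (s + 1) b) * T k n b
        = ∑ s ∈ Finset.Ico a b, chain k n a s * chain k n (s + 1) (b + 1) := by
      rw [Finset.sum_mul]
      refine Finset.sum_congr rfl fun s hs => ?_
      rw [mul_assoc, ← chain_succ k n (Finset.mem_Ico.mp hs).2]
    rw [chain_succ k n hab, ← mul_assoc, ih (by omega), add_mul, hsum, mul_assoc, hXT,
      Finset.sum_Ico_succ_top hab, chain_of_le k n (le_refl (b + 1))]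
    noncomm_ring

theorem chain_mul_X {a j b : ℕ} (haj : a ≤ j) (hjb : j < b) (hj : j + 1 < n) :
    chain k n a b * X k n j
      = X k n (j + 1) * chain k n a b + chain k n a j * chain k n (j + 1) b := by
  have hTX : T k n j * X k n j = X k n (j + 1) * T k n j + 1 :=
    eq_add_of_sub_eq' (TX k n j hj)
  have hleft := (commute_X_chain k n (p := j + 1) (a := a) (b := j) (by omega)).eq
  have hright := (commute_X_chain k n (p := j) (a := j + 1) (b := b) (by omega)).eq
  calc chain k n a b * X k n j
      = chain k n a j * (T k n j * X k n j) * chain k n (j + 1) b := by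
        rw [chain_eq_chain_mul_T_mul_chain k n haj hjb, mul_assoc, ← hright]; noncomm_ring
    _ = X k n (j + 1) * (chain k n a j * T k n j * chain k n (j + 1) b)
          + chain k n a j * chain k n (j + 1) b := by
        rw [hTX, mul_add, ← mul_assoc, ← hleft]; noncomm_ring
    _ = _ := by rw [← chain_eq_chain_mul_T_mul_chain k n haj hjb]

end Chain

section Embeddings

theorem incl_X {m j : ℕ} (h : m ≤ n) (hj : j < m) : incl k m n h (X k m j) = X k n j := by
  rw [incl, X]
  erw [RingQuot.liftAlgHom_mkAlgHom_apply, FreeAlgebra.lift_ι_apply]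
  exact if_pos hj

theorem incl_T {m j : ℕ} (h : m ≤ n) (hj : j + 1 < m) : incl k m n h (T k m j) = T k n j := by
  rw [incl, T]
  erw [RingQuot.liftAlgHom_mkAlgHom_apply, FreeAlgebra.lift_ι_apply]
  exact if_pos hj

theorem shj_X {m j : ℕ} (h : m + 1 ≤ n ∨ m = 0) (hj : j < m) :
    shj k m n h (X k m j) = X k n (j + 1) := by
  rw [shj, X]
  erw [RingQuot.liftAlgHom_mkAlgHom_apply, FreeAlgebra.lift_ι_apply]
  exact if_pos hj

theorem shj_T {m j : ℕ} (h : m + 1 ≤ n ∨ m = 0) (hj : j + 1 < m) :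
    shj k m n h (T k m j) = T k n (j + 1) := by
  rw [shj, T]
  erw [RingQuot.liftAlgHom_mkAlgHom_apply, FreeAlgebra.lift_ι_apply]
  exact if_pos hj

theorem iota0_C (c : H k (n - 1)) :
    iota0 k n (Polynomial.C c) = incl k (n - 1) n (Nat.sub_le n 1) c := by
  simp [iota0, Polynomial.sum_C_index]

theorem iota1_C (c : H k (n - 1)) :
    iota1 k n (Polynomial.C c) = shj k (n - 1) n (by omega) c := by
  simp [iota1, Polynomial.sum_C_index]

theorem iota0_X : iota0 k n Polynomial.X = X k n (n - 1) := by
  simp [iota0, Polynomial.sum_X_index]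

theorem iota1_X : iota1 k n Polynomial.X = X k n 0 := by
  simp [iota1, Polynomial.sum_X_index]

end Embeddings

section Balanced

noncomputable def balancedTmul : H k n →ₗ[k] H k n →ₗ[k] (H k n ⊗[k] H k n) ⧸ bal k n :=
  (TensorProduct.mk k (H k n) (H k n)).compr₂ (bal k n).mkQ

variable {k n}

theorem balancedTmul_apply (a b : H k n) :
    balancedTmul k n a b = (bal k n).mkQ (a ⊗ₜ[k] b) := rfl

theorem balancedTmul_mul_iota (a b : H k n) (p : Polynomial (H k (n - 1))) :
    balancedTmul k n (a * iota0 k n p) b = balancedTmul k n a (iota1 k n p * b) :=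
  (Submodule.Quotient.eq _).mpr (Submodule.subset_span ⟨a, b, p, rfl⟩)

theorem balancedTmul_mul_X {j : ℕ} (hj : j + 1 < n) (a b : H k n) :
    balancedTmul k n (a * X k n j) b = balancedTmul k n a (X k n (j + 1) * b) := by
  simpa [iota0_C, iota1_C, incl_X k n (Nat.sub_le n 1) (show j < n - 1 by omega),
    shj_X k n (show n - 1 + 1 ≤ n ∨ n - 1 = 0 by omega) (show j < n - 1 by omega)]
    using balancedTmul_mul_iota a b (Polynomial.C (X k (n - 1) j))

theorem balancedTmul_mul_X_last (a b : H k n) :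
    balancedTmul k n (a * X k n (n - 1)) b = balancedTmul k n a (X k n 0 * b) := by
  simpa [iota0_X, iota1_X] using balancedTmul_mul_iota a b Polynomial.X

theorem balancedTmul_mul_T {j : ℕ} (hj : j + 2 < n) (a b : H k n) :
    balancedTmul k n (a * T k n j) b = balancedTmul k n a (T k n (j + 1) * b) := by
  simpa [iota0_C, iota1_C, incl_T k n (Nat.sub_le n 1) (show j + 1 < n - 1 by omega),
    shj_T k n (show n - 1 + 1 ≤ n ∨ n - 1 = 0 by omega) (show j + 1 < n - 1 by omega)]
    using balancedTmul_mul_iota a b (Polynomial.C (T k (n - 1) j))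

theorem balancedTmul_mul_chain {a b : ℕ} (hb : b + 1 < n) (u v : H k n) :
    balancedTmul k n (u * chain k n a b) v
      = balancedTmul k n u (chain k n (a + 1) (b + 1) * v) := by
  induction b generalizing v with
  | zero => rw [chain_of_le k n (Nat.zero_le a), chain_of_le k n (by omega), mul_one, one_mul]
  | succ b ih =>
    rcases Nat.lt_or_ge b a with hba | hab
    · rw [chain_of_le k n (by omega), chain_of_le k n (by omega), mul_one, one_mul]
    · rw [chain_succ k n hab, chain_succ k n (by omega), ← mul_assoc,
        balancedTmul_mul_T (by omega), ih (by omega), mul_assoc]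

end Balanced

section Delta

noncomputable def deltaCommTerm (i r : ℕ) : (H k n ⊗[k] H k n) ⧸ bal k n :=
  balancedTmul k n (X k n i * chain k n r (n - 1)) (chain k n 0 r)
    - balancedTmul k n (chain k n r (n - 1)) (chain k n 0 r * X k n i)

theorem deltaCommTerm_of_lt {i r : ℕ} (hri : r < i) (hi : i < n) :
    deltaCommTerm k n i r
      = -balancedTmul k n (chain k n i (n - 1)) (chain k n (r + 1) i * chain k n 0 r) := by
  obtain ⟨j, rfl⟩ : ∃ j, i = j + 1 := ⟨i - 1, by omega⟩
  have hX : X k n (j + 1) * chain k n r (n - 1)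
      = chain k n r (n - 1) * X k n j - chain k n r j * chain k n (j + 1) (n - 1) :=
    eq_sub_of_add_eq (chain_mul_X k n (by omega) (by omega) hi).symm
  rw [deltaCommTerm, hX, ← (commute_X_chain k n (p := j + 1) (a := 0) (b := r) (by omega)).eq,
    map_sub, LinearMap.sub_apply, balancedTmul_mul_X hi,
    (commute_chain_chain k n (a := r) (b := j) (c := j + 1) (d := n - 1) (by omega)).eq,
    balancedTmul_mul_chain hi, sub_sub_cancel_left]

theorem deltaCommTerm_succ_of_le {i s : ℕ} (his : i ≤ s) (hsn : s + 1 < n) :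
    deltaCommTerm k n i (s + 1)
      = -balancedTmul k n (chain k n (s + 1) (n - 1) * chain k n i s) (chain k n 0 i) := by
  rw [deltaCommTerm, (commute_X_chain k n (p := i) (a := s + 1) (b := n - 1) (by omega)).eq,
    chain_mul_X k n (Nat.zero_le i) (by omega) (by omega), map_add, balancedTmul_mul_X (by omega),
    (commute_chain_chain k n (a := 0) (b := i) (c := i + 1) (d := s + 1) (by omega)).eq,
    balancedTmul_mul_chain hsn]
  abel

theorem deltaCommTerm_self {i : ℕ} (hi : i < n) :
    deltaCommTerm k n i i
      = ∑ s ∈ Finset.range i,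
          balancedTmul k n (chain k n i (n - 1)) (chain k n (s + 1) i * chain k n 0 s)
        + ∑ s ∈ Finset.Ico i (n - 1),
          balancedTmul k n (chain k n (s + 1) (n - 1) * chain k n i s) (chain k n 0 i) := by
  have hR : chain k n 0 i * X k n i
      = X k n 0 * chain k n 0 i - ∑ s ∈ Finset.range i, chain k n (s + 1) i * chain k n 0 s := by
    rw [X_mul_chain k n (Nat.zero_le i) hi, Finset.range_eq_Ico,
      Finset.sum_congr rfl fun s hs =>
        (commute_chain_chain k n (a := 0) (b := s) (c := s + 1) (d := i) (by omega)).eq,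
      add_sub_cancel_right]
  rw [deltaCommTerm, X_mul_chain k n (by omega) (by omega),
    Finset.sum_congr rfl fun s hs =>
      (commute_chain_chain k n (a := i) (b := s) (c := s + 1) (d := n - 1) (by omega)).eq,
    hR, map_add, LinearMap.add_apply, balancedTmul_mul_X_last, map_sub, map_sum, map_sum,
    LinearMap.sum_apply]
  abel

end Delta

end

/-- `x_i · Δ_n = Δ_n · x_i` in
`H_n ι_0 ⊗_{H_{n−1}[y]} ι_1 H_n` (realized as the quotient of `H_n ⊗_k H_n` by the
balancing submodule `bal`), for each `1 ≤ i ≤ n` (0-based: `i < n`). -/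
theorem x_delta_comm (k : Type) [Field k] (n i : ℕ) (hi : i < n) :
    (∑ r ∈ Finset.range n, (X k n i * chain k n r (n-1)) ⊗ₜ[k] chain k n 0 r)
      - (∑ r ∈ Finset.range n, chain k n r (n-1) ⊗ₜ[k] (chain k n 0 r * X k n i))
      ∈ bal k n := by
  have hsum : ∑ r ∈ Finset.range n, deltaCommTerm k n i r = 0 :=
    sum_range_eq_zero_of_split hi (fun r hr => deltaCommTerm_of_lt k n hr hi)
      (deltaCommTerm_self k n hi) (fun s his hsn => deltaCommTerm_succ_of_le k n his hsn)
  rw [← Submodule.Quotient.mk_eq_zero, ← Submodule.mkQ_apply, map_sub, map_sum, map_sum]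
  simpa only [deltaCommTerm, balancedTmul_apply, Finset.sum_sub_distrib] using hsum

end NilHecke
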